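/- Let b : ℝ² → ℝ³ be smooth (C^∞) and compactly supported, and let j = ∇×b = (∂₂b₃, −∂₁b₃, ∂₁b₂ − ∂₂b₁). Then for each k ∈ {1,2}, ∫_{ℝ²} (∇×(j×b))(x) · ∂ₖ²b(x) dx = −∫_{ℝ²} (j(x) × ∂ₖb(x)) · ∂ₖj(x) dx, where ∂ₖ²b denotes the second partial derivative of b in the k-th direction. -/

import Mathlib

open MeasureTheory

/-- Partial derivative in the `i`-th coordinate direction of `ℝ²`. -/
noncomputable def pd (i : Fin 2) (f : (Fin 2 → ℝ) → ℝ) (x : Fin 2 → ℝ) : ℝ :=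
  fderiv ℝ f x (Pi.single i 1)

/-- The 2½-dimensional curl `∇×F = (∂₂F₃, −∂₁F₃, ∂₁F₂ − ∂₂F₁)` of `F : ℝ² → ℝ³`. -/
noncomputable def curl (F : (Fin 2 → ℝ) → (Fin 3 → ℝ)) (x : Fin 2 → ℝ) : Fin 3 → ℝ :=
  ![pd 1 (fun y => F y 2) x, -(pd 0 (fun y => F y 2) x),
    pd 0 (fun y => F y 1) x - pd 1 (fun y => F y 0) x]

lemma top_add_one' : ((⊤:ℕ∞) : WithTop ℕ∞) + 1 ≤ ((⊤:ℕ∞) : WithTop ℕ∞) := by simp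

lemma two_le_top' : (2 : WithTop ℕ∞) ≤ ((⊤:ℕ∞) : WithTop ℕ∞) := by
  rw [show ((2:WithTop ℕ∞)) = ((2:ℕ∞) : WithTop ℕ∞) from rfl, WithTop.coe_le_coe]; exact le_top

lemma one_le_top' : (1 : WithTop ℕ∞) ≤ ((⊤:ℕ∞) : WithTop ℕ∞) := by
  rw [show ((1:WithTop ℕ∞)) = ((1:ℕ∞) : WithTop ℕ∞) from rfl, WithTop.coe_le_coe]; exact le_top

lemma pd_smooth {f : (Fin 2 → ℝ) → ℝ} (hf : ContDiff ℝ (⊤:ℕ∞) f) (i : Fin 2) :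
    ContDiff ℝ (⊤:ℕ∞) (pd i f) :=
  (hf.fderiv_right top_add_one').clm_apply contDiff_const

lemma pd_supp {f : (Fin 2 → ℝ) → ℝ} (hf : HasCompactSupport f) (i : Fin 2) :
    HasCompactSupport (pd i f) :=
  hf.fderiv_apply ℝ (Pi.single i 1)

lemma pd_eq' (m : Fin 2) (f : (Fin 2 → ℝ) → ℝ) :
    pd m f = fun y => fderiv ℝ f y (Pi.single m 1) := rfl

lemma pd_swap {f : (Fin 2 → ℝ) → ℝ} (hf : ContDiff ℝ (⊤:ℕ∞) f) (i l : Fin 2) :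
    pd i (pd l f) = pd l (pd i f) := by
  funext x
  have hsymm : IsSymmSndFDerivAt ℝ f x := (hf.contDiffAt).isSymmSndFDerivAt (by rw [minSmoothness_of_isRCLikeNormedField]; exact two_le_top')
  have hdiff : DifferentiableAt ℝ (fderiv ℝ f) x :=
    ((hf.fderiv_right top_add_one').differentiable (by simp)).differentiableAt
  have h1 : ∀ v w : Fin 2 → ℝ, fderiv ℝ (fun y => fderiv ℝ f y v) x w
      = fderiv ℝ (fderiv ℝ f) x w v := by
    intro v w
    rw [fderiv_clm_apply hdiff (differentiableAt_const v)]
    simp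
  show fderiv ℝ (pd l f) x (Pi.single i 1) = fderiv ℝ (pd i f) x (Pi.single l 1)
  rw [pd_eq' l, pd_eq' i, h1, h1, hsymm.eq]

lemma pd_neg (f : (Fin 2 → ℝ) → ℝ) (i : Fin 2) :
    pd i (fun x => -f x) = fun x => -(pd i f x) := by
  funext x; simp [pd, fderiv_neg]

lemma pd_sub {f g : (Fin 2 → ℝ) → ℝ} (hf : Differentiable ℝ f) (hg : Differentiable ℝ g)
    (i : Fin 2) : pd i (fun x => f x - g x) = fun x => pd i f x - pd i g x := by
  funext x; simp [pd, fderiv_fun_sub (hf x) (hg x)]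

lemma pd_mul {f g : (Fin 2 → ℝ) → ℝ} (hf : Differentiable ℝ f) (hg : Differentiable ℝ g)
    (i : Fin 2) (x : Fin 2 → ℝ) :
    pd i (fun y => f y * g y) x = pd i f x * g x + f x * pd i g x := by
  simp only [pd, fderiv_fun_mul (hf x) (hg x)]
  simp; ring

lemma slice0 (f : (Fin 2 → ℝ) → ℝ) (hf : ContDiff ℝ (⊤:ℕ∞) f)
    (hs : HasCompactSupport f) (c : ℝ) : (∫ a : ℝ, pd 0 f ![a, c]) = 0 := by
  have hψ : ∀ a : ℝ, HasDerivAt (fun a => (![a, c] : Fin 2 → ℝ)) (Pi.single 0 1) a := by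
    intro a
    rw [hasDerivAt_pi]
    intro j
    fin_cases j
    · simpa using (hasDerivAt_id' a)
    · simpa using (hasDerivAt_const a c)
  have hderiv : ∀ a : ℝ, HasDerivAt (fun a => f ![a, c]) (pd 0 f ![a, c]) a := by
    intro a
    exact (hf.differentiable (by simp) ![a, c]).hasFDerivAt.comp_hasDerivAt a (hψ a)
  have hK : IsCompact ((fun x : Fin 2 → ℝ => x 0) '' tsupport f) :=
    hs.image (continuous_apply 0)
  have hsupp1 : HasCompactSupport (fun a => f ![a, c]) := by
    apply HasCompactSupport.intro hK
    intro a ha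
    by_contra h
    exact ha ⟨![a, c], subset_tsupport f h, by simp⟩
  have hsupp2 : HasCompactSupport (fun a => pd 0 f ![a, c]) := by
    apply HasCompactSupport.intro hK
    intro a ha
    by_contra h
    refine ha ⟨![a, c], ?_, by simp⟩
    apply support_fderiv_subset ℝ
    simp only [Function.mem_support]
    intro h0
    exact h (by simp [pd, h0])
  have hcont : Continuous fun x => pd 0 f x := (pd_smooth hf 0).continuous
  have hcurve : Continuous fun a : ℝ => (![a, c] : Fin 2 → ℝ) := by
    apply continuous_pi
    intro j; fin_cases j
    · simpa using continuous_id'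
    · simpa using continuous_const
  exact integral_eq_zero_of_hasDerivAt_of_integrable hderiv
    ((hcont.comp hcurve).integrable_of_hasCompactSupport hsupp2)
    ((hf.continuous.comp hcurve).integrable_of_hasCompactSupport hsupp1)

lemma slice1 (f : (Fin 2 → ℝ) → ℝ) (hf : ContDiff ℝ (⊤:ℕ∞) f)
    (hs : HasCompactSupport f) (c : ℝ) : (∫ a : ℝ, pd 1 f ![c, a]) = 0 := by
  have hψ : ∀ a : ℝ, HasDerivAt (fun a => (![c, a] : Fin 2 → ℝ)) (Pi.single 1 1) a := by
    intro a
    rw [hasDerivAt_pi]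
    intro j
    fin_cases j
    · simpa using (hasDerivAt_const a c)
    · simpa using (hasDerivAt_id' a)
  have hderiv : ∀ a : ℝ, HasDerivAt (fun a => f ![c, a]) (pd 1 f ![c, a]) a := by
    intro a
    exact (hf.differentiable (by simp) ![c, a]).hasFDerivAt.comp_hasDerivAt a (hψ a)
  have hK : IsCompact ((fun x : Fin 2 → ℝ => x 1) '' tsupport f) :=
    hs.image (continuous_apply 1)
  have hsupp1 : HasCompactSupport (fun a => f ![c, a]) := by
    apply HasCompactSupport.intro hK
    intro a ha
    by_contra h
    exact ha ⟨![c, a], subset_tsupport f h, by simp⟩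
  have hsupp2 : HasCompactSupport (fun a => pd 1 f ![c, a]) := by
    apply HasCompactSupport.intro hK
    intro a ha
    by_contra h
    refine ha ⟨![c, a], ?_, by simp⟩
    apply support_fderiv_subset ℝ
    simp only [Function.mem_support]
    intro h0
    exact h (by simp [pd, h0])
  have hcont : Continuous fun x => pd 1 f x := (pd_smooth hf 1).continuous
  have hcurve : Continuous fun a : ℝ => (![c, a] : Fin 2 → ℝ) := by
    apply continuous_pi
    intro j; fin_cases j
    · simpa using continuous_const
    · simpa using continuous_id'
  exact integral_eq_zero_of_hasDerivAt_of_integrable hderiv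
    ((hcont.comp hcurve).integrable_of_hasCompactSupport hsupp2)
    ((hf.continuous.comp hcurve).integrable_of_hasCompactSupport hsupp1)

lemma integral_pd_eq_zero (f : (Fin 2 → ℝ) → ℝ) (hf : ContDiff ℝ (⊤:ℕ∞) f)
    (hs : HasCompactSupport f) (i : Fin 2) : ∫ x, pd i f x = 0 := by
  have hmp := (MeasureTheory.volume_preserving_finTwoArrow ℝ)
  have key : ∫ x, pd i f x = ∫ p : ℝ × ℝ, pd i f ![p.1, p.2] := by
    rw [← hmp.integral_comp (MeasurableEquiv.finTwoArrow).measurableEmbedding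
      (fun p : ℝ × ℝ => pd i f ![p.1, p.2])]
    congr 1; funext x
    congr 1
    funext j; fin_cases j <;> rfl
  have hgeq : (fun p : ℝ × ℝ => pd i f ![p.1, p.2])
      = (pd i f) ∘ (Homeomorph.finTwoArrow (X := ℝ)).symm := by
    rfl
  have hint : Integrable (fun p : ℝ × ℝ => pd i f ![p.1, p.2]) := by
    rw [hgeq]
    exact (((pd_smooth hf i).continuous).comp
        (Homeomorph.finTwoArrow (X := ℝ)).symm.continuous).integrable_of_hasCompactSupport
      ((pd_supp hs i).comp_homeomorph _)
  rw [key]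
  rw [MeasureTheory.Measure.volume_eq_prod] at hint ⊢
  rw [MeasureTheory.integral_prod _ hint]
  fin_cases i
  · rw [MeasureTheory.integral_integral_swap hint]
    simp [slice0 f hf hs]
  · simp [slice1 f hf hs]

lemma integral_pd_mul (f g : (Fin 2 → ℝ) → ℝ) (hf : ContDiff ℝ (⊤:ℕ∞) f)
    (hfs : HasCompactSupport f) (hg : ContDiff ℝ (⊤:ℕ∞) g) (i : Fin 2) :
    ∫ x, pd i f x * g x = - ∫ x, f x * pd i g x := by
  have hdf : Differentiable ℝ f := hf.differentiable (by simp)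
  have hdg : Differentiable ℝ g := hg.differentiable (by simp)
  have hzero : ∫ x, pd i (fun y => f y * g y) x = 0 :=
    integral_pd_eq_zero _ (hf.mul hg) (hfs.mul_right) i
  have hsplit : ∀ x, pd i (fun y => f y * g y) x = pd i f x * g x + f x * pd i g x :=
    fun x => pd_mul hdf hdg i x
  rw [funext hsplit] at hzero
  have h1 : Integrable (fun x => pd i f x * g x) :=
    (((pd_smooth hf i).continuous).mul hg.continuous).integrable_of_hasCompactSupport
      ((pd_supp hfs i).mul_right)
  have h2 : Integrable (fun x => f x * pd i g x) :=
    ((hf.continuous.mul (pd_smooth hg i).continuous)).integrable_of_hasCompactSupport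
      (hfs.mul_right)
  rw [integral_add h1 h2] at hzero
  linarith

lemma integrable_mul_cs {f g : (Fin 2 → ℝ) → ℝ} (hf : Continuous f) (hfs : HasCompactSupport f)
    (hg : Continuous g) : MeasureTheory.Integrable (fun x => f x * g x) :=
  (hf.mul hg).integrable_of_hasCompactSupport hfs.mul_right

lemma hcs_neg {f : (Fin 2 → ℝ) → ℝ} (hf : HasCompactSupport f) :
    HasCompactSupport (fun y => -(f y)) :=
  hf.comp_left (g := Neg.neg) neg_zero

lemma hcs_sub {f g : (Fin 2 → ℝ) → ℝ} (hf : HasCompactSupport f) (hg : HasCompactSupport g) :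
    HasCompactSupport (fun y => f y - g y) := by
  have e : (fun y => f y - g y) = f + fun y => -(g y) := by
    funext y; simp [sub_eq_add_neg]
  rw [e]
  exact hf.add (hcs_neg hg)

lemma hcs_mul {f : (Fin 2 → ℝ) → ℝ} (g : (Fin 2 → ℝ) → ℝ) (hf : HasCompactSupport f) :
    HasCompactSupport (fun y => f y * g y) :=
  hf.mul_right

lemma integral_comb4 (f1 f2 f3 f4 : (Fin 2 → ℝ) → ℝ)
    (h1 : MeasureTheory.Integrable f1) (h2 : MeasureTheory.Integrable f2)
    (h3 : MeasureTheory.Integrable f3) (h4 : MeasureTheory.Integrable f4) :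
    ∫ x, ((f1 x - f2 x) + (f3 x - f4 x))
      = ((∫ x, f1 x) - ∫ x, f2 x) + ((∫ x, f3 x) - ∫ x, f4 x) := by
  rw [← MeasureTheory.integral_sub h1 h2, ← MeasureTheory.integral_sub h3 h4]
  exact MeasureTheory.integral_add (h1.sub h2) (h3.sub h4)

lemma main_core (b0 b1 b2 : (Fin 2 → ℝ) → ℝ) (k : Fin 2)
    (h0 : ContDiff ℝ (⊤:ℕ∞) b0) (h1 : ContDiff ℝ (⊤:ℕ∞) b1) (h2 : ContDiff ℝ (⊤:ℕ∞) b2)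
    (s0 : HasCompactSupport b0) (s1 : HasCompactSupport b1) (s2 : HasCompactSupport b2) :
    ∫ x, pd 1 (fun y => pd 1 b2 y * b1 y - (-(pd 0 b2 y)) * b0 y) x * pd k (pd k b0) x
        + (-(pd 0 (fun y => pd 1 b2 y * b1 y - (-(pd 0 b2 y)) * b0 y) x)) * pd k (pd k b1) x
        + (pd 0 (fun y => (pd 0 b1 y - pd 1 b0 y) * b0 y - pd 1 b2 y * b2 y) x
            - pd 1 (fun y => (-(pd 0 b2 y)) * b2 y - (pd 0 b1 y - pd 1 b0 y) * b1 y) x)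
          * pd k (pd k b2) x
      = - ∫ x, ((-(pd 0 b2 x)) * pd k b2 x - (pd 0 b1 x - pd 1 b0 x) * pd k b1 x)
            * pd k (pd 1 b2) x
          + ((pd 0 b1 x - pd 1 b0 x) * pd k b0 x - pd 1 b2 x * pd k b2 x)
            * pd k (fun y => -(pd 0 b2 y)) x
          + (pd 1 b2 x * pd k b1 x - (-(pd 0 b2 x)) * pd k b0 x)
            * pd k (fun y => pd 0 b1 y - pd 1 b0 y) x := by
  have hd : ∀ {f : (Fin 2 → ℝ) → ℝ}, ContDiff ℝ (⊤:ℕ∞) f → Differentiable ℝ f :=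
    fun hf => hf.differentiable (by simp)
  have hF0 : ContDiff ℝ (⊤:ℕ∞) (fun y => (-(pd 0 b2 y)) * b2 y - (pd 0 b1 y - pd 1 b0 y) * b1 y) :=
    ((pd_smooth h2 0).neg.mul h2).sub (((pd_smooth h1 0).sub (pd_smooth h0 1)).mul h1)
  have hF1 : ContDiff ℝ (⊤:ℕ∞) (fun y => (pd 0 b1 y - pd 1 b0 y) * b0 y - pd 1 b2 y * b2 y) :=
    (((pd_smooth h1 0).sub (pd_smooth h0 1)).mul h0).sub ((pd_smooth h2 1).mul h2)
  have hF2 : ContDiff ℝ (⊤:ℕ∞) (fun y => pd 1 b2 y * b1 y - (-(pd 0 b2 y)) * b0 y) :=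
    ((pd_smooth h2 1).mul h1).sub ((pd_smooth h2 0).neg.mul h0)
  have sF0 : HasCompactSupport (fun y => (-(pd 0 b2 y)) * b2 y - (pd 0 b1 y - pd 1 b0 y) * b1 y) :=
    hcs_sub (hcs_mul _ (hcs_neg (pd_supp s2 0))) (hcs_mul _ (hcs_sub (pd_supp s1 0) (pd_supp s0 1)))
  have sF1 : HasCompactSupport (fun y => (pd 0 b1 y - pd 1 b0 y) * b0 y - pd 1 b2 y * b2 y) :=
    hcs_sub (hcs_mul _ (hcs_sub (pd_supp s1 0) (pd_supp s0 1))) (hcs_mul _ (pd_supp s2 1))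
  have sF2 : HasCompactSupport (fun y => pd 1 b2 y * b1 y - (-(pd 0 b2 y)) * b0 y) :=
    hcs_sub (hcs_mul _ (pd_supp s2 1)) (hcs_mul _ (hcs_neg (pd_supp s2 0)))
  have intA1 : MeasureTheory.Integrable (fun x => pd 1 (fun y => pd 1 b2 y * b1 y - (-(pd 0 b2 y)) * b0 y) x * pd k (pd k b0) x) :=
    integrable_mul_cs (pd_smooth hF2 1).continuous (pd_supp sF2 1)
      (pd_smooth (pd_smooth h0 k) k).continuous
  have intA2 : MeasureTheory.Integrable (fun x => pd 0 (fun y => pd 1 b2 y * b1 y - (-(pd 0 b2 y)) * b0 y) x * pd k (pd k b1) x) :=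
    integrable_mul_cs (pd_smooth hF2 0).continuous (pd_supp sF2 0)
      (pd_smooth (pd_smooth h1 k) k).continuous
  have intA3 : MeasureTheory.Integrable (fun x => pd 0 (fun y => (pd 0 b1 y - pd 1 b0 y) * b0 y - pd 1 b2 y * b2 y) x * pd k (pd k b2) x) :=
    integrable_mul_cs (pd_smooth hF1 0).continuous (pd_supp sF1 0)
      (pd_smooth (pd_smooth h2 k) k).continuous
  have intA4 : MeasureTheory.Integrable (fun x => pd 1 (fun y => (-(pd 0 b2 y)) * b2 y - (pd 0 b1 y - pd 1 b0 y) * b1 y) x * pd k (pd k b2) x) :=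
    integrable_mul_cs (pd_smooth hF0 1).continuous (pd_supp sF0 1)
      (pd_smooth (pd_smooth h2 k) k).continuous
  have intB1 : MeasureTheory.Integrable (fun x => pd k (fun y => pd 1 b2 y * b1 y - (-(pd 0 b2 y)) * b0 y) x * pd k (pd 1 b0) x) :=
    integrable_mul_cs (pd_smooth hF2 k).continuous (pd_supp sF2 k)
      (pd_smooth (pd_smooth h0 1) k).continuous
  have intB2 : MeasureTheory.Integrable (fun x => pd k (fun y => pd 1 b2 y * b1 y - (-(pd 0 b2 y)) * b0 y) x * pd k (pd 0 b1) x) :=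
    integrable_mul_cs (pd_smooth hF2 k).continuous (pd_supp sF2 k)
      (pd_smooth (pd_smooth h1 0) k).continuous
  have intB3 : MeasureTheory.Integrable (fun x => pd k (fun y => (pd 0 b1 y - pd 1 b0 y) * b0 y - pd 1 b2 y * b2 y) x * pd k (pd 0 b2) x) :=
    integrable_mul_cs (pd_smooth hF1 k).continuous (pd_supp sF1 k)
      (pd_smooth (pd_smooth h2 0) k).continuous
  have intB4 : MeasureTheory.Integrable (fun x => pd k (fun y => (-(pd 0 b2 y)) * b2 y - (pd 0 b1 y - pd 1 b0 y) * b1 y) x * pd k (pd 1 b2) x) :=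
    integrable_mul_cs (pd_smooth hF0 k).continuous (pd_supp sF0 k)
      (pd_smooth (pd_smooth h2 1) k).continuous
  -- split the LHS into four integrals
  have eq1 : (∫ x, pd 1 (fun y => pd 1 b2 y * b1 y - (-(pd 0 b2 y)) * b0 y) x * pd k (pd k b0) x
        + (-(pd 0 (fun y => pd 1 b2 y * b1 y - (-(pd 0 b2 y)) * b0 y) x)) * pd k (pd k b1) x
        + (pd 0 (fun y => (pd 0 b1 y - pd 1 b0 y) * b0 y - pd 1 b2 y * b2 y) x
            - pd 1 (fun y => (-(pd 0 b2 y)) * b2 y - (pd 0 b1 y - pd 1 b0 y) * b1 y) x)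
          * pd k (pd k b2) x)
      = ((∫ x, pd 1 (fun y => pd 1 b2 y * b1 y - (-(pd 0 b2 y)) * b0 y) x * pd k (pd k b0) x) - ∫ x, pd 0 (fun y => pd 1 b2 y * b1 y - (-(pd 0 b2 y)) * b0 y) x * pd k (pd k b1) x)
        + ((∫ x, pd 0 (fun y => (pd 0 b1 y - pd 1 b0 y) * b0 y - pd 1 b2 y * b2 y) x * pd k (pd k b2) x) - ∫ x, pd 1 (fun y => (-(pd 0 b2 y)) * b2 y - (pd 0 b1 y - pd 1 b0 y) * b1 y) x * pd k (pd k b2) x) := by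
    rw [show (fun x => pd 1 (fun y => pd 1 b2 y * b1 y - (-(pd 0 b2 y)) * b0 y) x * pd k (pd k b0) x
        + (-(pd 0 (fun y => pd 1 b2 y * b1 y - (-(pd 0 b2 y)) * b0 y) x)) * pd k (pd k b1) x
        + (pd 0 (fun y => (pd 0 b1 y - pd 1 b0 y) * b0 y - pd 1 b2 y * b2 y) x
            - pd 1 (fun y => (-(pd 0 b2 y)) * b2 y - (pd 0 b1 y - pd 1 b0 y) * b1 y) x)
          * pd k (pd k b2) x)
        = fun x => ((pd 1 (fun y => pd 1 b2 y * b1 y - (-(pd 0 b2 y)) * b0 y) x * pd k (pd k b0) x) - (pd 0 (fun y => pd 1 b2 y * b1 y - (-(pd 0 b2 y)) * b0 y) x * pd k (pd k b1) x)) + ((pd 0 (fun y => (pd 0 b1 y - pd 1 b0 y) * b0 y - pd 1 b2 y * b2 y) x * pd k (pd k b2) x) - (pd 1 (fun y => (-(pd 0 b2 y)) * b2 y - (pd 0 b1 y - pd 1 b0 y) * b1 y) x * pd k (pd k b2) x))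
      from funext fun x => by ring]
    exact integral_comb4 _ _ _ _ intA1 intA2 intA3 intA4
  -- move the outer derivative across
  have eq2 : (∫ x, pd 1 (fun y => pd 1 b2 y * b1 y - (-(pd 0 b2 y)) * b0 y) x * pd k (pd k b0) x) = - ∫ x, (fun y => pd 1 b2 y * b1 y - (-(pd 0 b2 y)) * b0 y) x * pd 1 (pd k (pd k b0)) x :=
    integral_pd_mul _ _ hF2 sF2 (pd_smooth (pd_smooth h0 k) k) 1
  have eq3 : (∫ x, pd 0 (fun y => pd 1 b2 y * b1 y - (-(pd 0 b2 y)) * b0 y) x * pd k (pd k b1) x) = - ∫ x, (fun y => pd 1 b2 y * b1 y - (-(pd 0 b2 y)) * b0 y) x * pd 0 (pd k (pd k b1)) x :=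
    integral_pd_mul _ _ hF2 sF2 (pd_smooth (pd_smooth h1 k) k) 0
  have eq4 : (∫ x, pd 0 (fun y => (pd 0 b1 y - pd 1 b0 y) * b0 y - pd 1 b2 y * b2 y) x * pd k (pd k b2) x) = - ∫ x, (fun y => (pd 0 b1 y - pd 1 b0 y) * b0 y - pd 1 b2 y * b2 y) x * pd 0 (pd k (pd k b2)) x :=
    integral_pd_mul _ _ hF1 sF1 (pd_smooth (pd_smooth h2 k) k) 0
  have eq5 : (∫ x, pd 1 (fun y => (-(pd 0 b2 y)) * b2 y - (pd 0 b1 y - pd 1 b0 y) * b1 y) x * pd k (pd k b2) x) = - ∫ x, (fun y => (-(pd 0 b2 y)) * b2 y - (pd 0 b1 y - pd 1 b0 y) * b1 y) x * pd 1 (pd k (pd k b2)) x :=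
    integral_pd_mul _ _ hF0 sF0 (pd_smooth (pd_smooth h2 k) k) 1
  -- swap derivatives and move one ∂ₖ back
  have key : ∀ (m : Fin 2) (f F : (Fin 2 → ℝ) → ℝ), ContDiff ℝ (⊤:ℕ∞) f →
      ContDiff ℝ (⊤:ℕ∞) F → HasCompactSupport F →
      ∫ x, F x * pd m (pd k (pd k f)) x = - ∫ x, pd k F x * pd k (pd m f) x := by
    intro m f F hf hF sF
    have hswap : pd m (pd k (pd k f)) = pd k (pd k (pd m f)) := by
      rw [pd_swap (pd_smooth hf k) m k, pd_swap hf m k]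
    rw [hswap]
    have := integral_pd_mul F (pd k (pd m f)) hF sF (pd_smooth (pd_smooth hf m) k) k
    linarith
  have eq6 : (∫ x, (fun y => pd 1 b2 y * b1 y - (-(pd 0 b2 y)) * b0 y) x * pd 1 (pd k (pd k b0)) x) = - ∫ x, pd k (fun y => pd 1 b2 y * b1 y - (-(pd 0 b2 y)) * b0 y) x * pd k (pd 1 b0) x :=
    key 1 b0 _ h0 hF2 sF2
  have eq7 : (∫ x, (fun y => pd 1 b2 y * b1 y - (-(pd 0 b2 y)) * b0 y) x * pd 0 (pd k (pd k b1)) x) = - ∫ x, pd k (fun y => pd 1 b2 y * b1 y - (-(pd 0 b2 y)) * b0 y) x * pd k (pd 0 b1) x :=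
    key 0 b1 _ h1 hF2 sF2
  have eq8 : (∫ x, (fun y => (pd 0 b1 y - pd 1 b0 y) * b0 y - pd 1 b2 y * b2 y) x * pd 0 (pd k (pd k b2)) x) = - ∫ x, pd k (fun y => (pd 0 b1 y - pd 1 b0 y) * b0 y - pd 1 b2 y * b2 y) x * pd k (pd 0 b2) x :=
    key 0 b2 _ h2 hF1 sF1
  have eq9 : (∫ x, (fun y => (-(pd 0 b2 y)) * b2 y - (pd 0 b1 y - pd 1 b0 y) * b1 y) x * pd 1 (pd k (pd k b2)) x) = - ∫ x, pd k (fun y => (-(pd 0 b2 y)) * b2 y - (pd 0 b1 y - pd 1 b0 y) * b1 y) x * pd k (pd 1 b2) x :=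
    key 1 b2 _ h2 hF0 sF0
  -- pointwise expansion of ∂ₖ of the cross-product components
  have en : pd k (fun y => -(pd 0 b2 y)) = fun x => -(pd k (pd 0 b2) x) := pd_neg (pd 0 b2) k
  have es : pd k (fun y => pd 0 b1 y - pd 1 b0 y)
      = fun x => pd k (pd 0 b1) x - pd k (pd 1 b0) x :=
    pd_sub (hd (pd_smooth h1 0)) (hd (pd_smooth h0 1)) k
  have hp2 : ∀ x, pd k (fun y => pd 1 b2 y * b1 y - (-(pd 0 b2 y)) * b0 y) x
      = (pd k (pd 1 b2) x * b1 x + pd 1 b2 x * pd k b1 x)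
        - ((-(pd k (pd 0 b2) x)) * b0 x + (-(pd 0 b2 x)) * pd k b0 x) := by
    intro x
    rw [pd_sub (f := fun y => pd 1 b2 y * b1 y) (g := fun y => (-(pd 0 b2 y)) * b0 y) ((hd (pd_smooth h2 1)).mul (hd h1)) ((hd (pd_smooth h2 0)).neg.mul (hd h0)) k]
    beta_reduce
    rw [pd_mul (hd (pd_smooth h2 1)) (hd h1) k x,
        pd_mul (f := fun y => -(pd 0 b2 y)) (g := b0) (hd (pd_smooth h2 0)).neg (hd h0) k x, en]
  have hp1 : ∀ x, pd k (fun y => (pd 0 b1 y - pd 1 b0 y) * b0 y - pd 1 b2 y * b2 y) x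
      = ((pd k (pd 0 b1) x - pd k (pd 1 b0) x) * b0 x
          + (pd 0 b1 x - pd 1 b0 x) * pd k b0 x)
        - (pd k (pd 1 b2) x * b2 x + pd 1 b2 x * pd k b2 x) := by
    intro x
    rw [pd_sub (f := fun y => (pd 0 b1 y - pd 1 b0 y) * b0 y) (g := fun y => pd 1 b2 y * b2 y) (((hd (pd_smooth h1 0)).sub (hd (pd_smooth h0 1))).mul (hd h0))
        ((hd (pd_smooth h2 1)).mul (hd h2)) k]
    beta_reduce
    rw [pd_mul (f := fun y => pd 0 b1 y - pd 1 b0 y) (g := b0) ((hd (pd_smooth h1 0)).sub (hd (pd_smooth h0 1))) (hd h0) k x,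
        pd_mul (hd (pd_smooth h2 1)) (hd h2) k x, es]
  have hp0 : ∀ x, pd k (fun y => (-(pd 0 b2 y)) * b2 y - (pd 0 b1 y - pd 1 b0 y) * b1 y) x
      = ((-(pd k (pd 0 b2) x)) * b2 x + (-(pd 0 b2 x)) * pd k b2 x)
        - ((pd k (pd 0 b1) x - pd k (pd 1 b0) x) * b1 x
          + (pd 0 b1 x - pd 1 b0 x) * pd k b1 x) := by
    intro x
    rw [pd_sub (f := fun y => (-(pd 0 b2 y)) * b2 y) (g := fun y => (pd 0 b1 y - pd 1 b0 y) * b1 y) ((hd (pd_smooth h2 0)).neg.mul (hd h2))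
        (((hd (pd_smooth h1 0)).sub (hd (pd_smooth h0 1))).mul (hd h1)) k]
    beta_reduce
    rw [pd_mul (f := fun y => -(pd 0 b2 y)) (g := b2) (hd (pd_smooth h2 0)).neg (hd h2) k x,
        pd_mul (f := fun y => pd 0 b1 y - pd 1 b0 y) (g := b1) ((hd (pd_smooth h1 0)).sub (hd (pd_smooth h0 1))) (hd h1) k x, en, es]
  -- identify the RHS integrand
  have eq10 : (∫ x, ((-(pd 0 b2 x)) * pd k b2 x - (pd 0 b1 x - pd 1 b0 x) * pd k b1 x)
            * pd k (pd 1 b2) x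
          + ((pd 0 b1 x - pd 1 b0 x) * pd k b0 x - pd 1 b2 x * pd k b2 x)
            * pd k (fun y => -(pd 0 b2 y)) x
          + (pd 1 b2 x * pd k b1 x - (-(pd 0 b2 x)) * pd k b0 x)
            * pd k (fun y => pd 0 b1 y - pd 1 b0 y) x)
      = ((∫ x, pd k (fun y => pd 1 b2 y * b1 y - (-(pd 0 b2 y)) * b0 y) x * pd k (pd 0 b1) x) - ∫ x, pd k (fun y => pd 1 b2 y * b1 y - (-(pd 0 b2 y)) * b0 y) x * pd k (pd 1 b0) x)
        + ((∫ x, pd k (fun y => (-(pd 0 b2 y)) * b2 y - (pd 0 b1 y - pd 1 b0 y) * b1 y) x * pd k (pd 1 b2) x) - ∫ x, pd k (fun y => (pd 0 b1 y - pd 1 b0 y) * b0 y - pd 1 b2 y * b2 y) x * pd k (pd 0 b2) x) := by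
    rw [show (fun x => ((-(pd 0 b2 x)) * pd k b2 x - (pd 0 b1 x - pd 1 b0 x) * pd k b1 x)
            * pd k (pd 1 b2) x
          + ((pd 0 b1 x - pd 1 b0 x) * pd k b0 x - pd 1 b2 x * pd k b2 x)
            * pd k (fun y => -(pd 0 b2 y)) x
          + (pd 1 b2 x * pd k b1 x - (-(pd 0 b2 x)) * pd k b0 x)
            * pd k (fun y => pd 0 b1 y - pd 1 b0 y) x)
        = fun x => ((pd k (fun y => pd 1 b2 y * b1 y - (-(pd 0 b2 y)) * b0 y) x * pd k (pd 0 b1) x) - (pd k (fun y => pd 1 b2 y * b1 y - (-(pd 0 b2 y)) * b0 y) x * pd k (pd 1 b0) x)) + ((pd k (fun y => (-(pd 0 b2 y)) * b2 y - (pd 0 b1 y - pd 1 b0 y) * b1 y) x * pd k (pd 1 b2) x) - (pd k (fun y => (pd 0 b1 y - pd 1 b0 y) * b0 y - pd 1 b2 y * b2 y) x * pd k (pd 0 b2) x))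
      from funext fun x => by rw [hp0 x, hp1 x, hp2 x, en, es]; ring]
    exact integral_comb4 _ _ _ _ intB2 intB1 intB4 intB3
  linarith [eq1, eq2, eq3, eq4, eq5, eq6, eq7, eq8, eq9, eq10]

/-- For `b : ℝ² → ℝ³` smooth and compactly supported, with `j = ∇×b`, for each `k ∈ {1,2}`:
`∫ ∇×(j×b) · ∂ₖ²b dx = −∫ (j × ∂ₖb) · ∂ₖj dx`. -/
theorem hall_term_second_deriv_identity (b : (Fin 2 → ℝ) → (Fin 3 → ℝ))
    (hsmooth : ContDiff ℝ (⊤ : ℕ∞) b) (hsupp : HasCompactSupport b) (k : Fin 2) :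
    ∫ x, ∑ i, curl (fun y => crossProduct (curl b y) (b y)) x i
        * pd k (fun y => pd k (fun z => b z i) y) x
      = - ∫ x, ∑ i, crossProduct (curl b x) (fun m => pd k (fun y => b y m) x) i
          * pd k (fun y => curl b y i) x := by
  simp only [curl, cross_apply, Fin.sum_univ_three, Matrix.cons_val_zero, Matrix.cons_val_one,
    Matrix.head_cons, Matrix.cons_val_two, Matrix.tail_cons]
  exact main_core (fun y => b y 0) (fun y => b y 1) (fun y => b y 2) k
    (((ContinuousLinearMap.proj (R := ℝ) (φ := fun _ : Fin 3 => ℝ) 0).contDiff).comp hsmooth)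
    (((ContinuousLinearMap.proj (R := ℝ) (φ := fun _ : Fin 3 => ℝ) 1).contDiff).comp hsmooth)
    (((ContinuousLinearMap.proj (R := ℝ) (φ := fun _ : Fin 3 => ℝ) 2).contDiff).comp hsmooth)
    (hsupp.comp_left (g := fun v : Fin 3 → ℝ => v 0) rfl)
    (hsupp.comp_left (g := fun v : Fin 3 → ℝ => v 1) rfl)
    (hsupp.comp_left (g := fun v : Fin 3 → ℝ => v 2) rfl)
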